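/- arXiv:2603.03766 — 5 statements merged into one kernel-verified Lean document; each statement's English description precedes it below -/
import Mathlib

section
/- Let V be a nonzero finite-dimensional vector space over a field k, and let (T_r)_{r ≥ 1} be a countable family of linear endomorphisms of V such that T_r ∘ T_s = - T_s ∘ T_r for all r, s ≥ 1 and T_r² = 0 for all r ≥ 1. Then there exists a nonzero vector v ∈ V with T_r v = 0 for all r ≥ 1. -/
theorem stmt_0 (k V : Type*) [Field k] [AddCommGroup V] [Module k V]
    [FiniteDimensional k V] [Nontrivial V]
    (T : ℕ+ → (V →ₗ[k] V))
    (hanti : ∀ r s : ℕ+, T r ∘ₗ T s = - (T s ∘ₗ T r))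
    (hsq : ∀ r : ℕ+, T r ∘ₗ T r = 0) :
    ∃ v : V, v ≠ 0 ∧ ∀ r : ℕ+, T r v = 0 := by
  obtain ⟨v0, hv0⟩ := exists_ne (0 : V)
  suffices H : ∀ n : ℕ, ∀ v : V, v ≠ 0 →
      Module.finrank k (⨅ r ∈ {r : ℕ+ | T r v = 0}, LinearMap.ker (T r) : Submodule k V) = n →
      ∃ w : V, w ≠ 0 ∧ ∀ r : ℕ+, T r w = 0 by
    exact H _ v0 hv0 rfl
  intro n
  induction n using Nat.strong_induction_on with
  | _ n ih =>
    intro v hv hrank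
    by_cases hall : ∀ r, T r v = 0
    · exact ⟨v, hv, hall⟩
    · push_neg at hall
      obtain ⟨s, hs⟩ := hall
      set w := T s v with hw
      have hsw : T s w = 0 := by
        have h1 := congrFun (congrArg DFunLike.coe (hsq s)) v
        simpa [LinearMap.comp_apply] using h1
      have hkill : ∀ r : ℕ+, T r v = 0 → T r w = 0 := by
        intro r hr
        have h1 := congrFun (congrArg DFunLike.coe (hanti r s)) v
        simp only [LinearMap.comp_apply, LinearMap.neg_apply] at h1
        simp [hw, h1, hr]
      have hlt : (⨅ r ∈ {r : ℕ+ | T r w = 0}, LinearMap.ker (T r) : Submodule k V) <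
          (⨅ r ∈ {r : ℕ+ | T r v = 0}, LinearMap.ker (T r)) := by
        apply lt_of_le_of_ne
        · refine le_iInf₂ fun r hr => ?_
          exact iInf₂_le r (hkill r hr)
        · intro heq
          have hvmem : v ∈ (⨅ r ∈ {r : ℕ+ | T r v = 0}, LinearMap.ker (T r) : Submodule k V) := by
            simp only [Submodule.mem_iInf, LinearMap.mem_ker, Set.mem_setOf_eq]
            exact fun r hr => hr
          rw [← heq] at hvmem
          have : v ∈ LinearMap.ker (T s) :=
            (iInf₂_le s hsw : _ ≤ LinearMap.ker (T s)) hvmem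
          exact hs this
      have hfr := Submodule.finrank_lt_finrank_of_lt hlt
      rw [hrank] at hfr
      exact ih _ hfr w hs rfl
end

section
/- Let A be an associative ring of prime characteristic p, and let h, x ∈ A satisfy h x - x h = x. Then (h^p - h) commutes with x, i.e. [h^p - h, x] = 0. -/
theorem stmt_2 (A : Type*) [Ring A] (p : ℕ) (hp : p.Prime) [CharP A p]
    (h x : A) (hx : h * x - x * h = x) :
    (h ^ p - h) * x - x * (h ^ p - h) = 0 := by
  haveI := Fact.mk hp
  have k0 : h * x = x + x * h := sub_eq_iff_eq_add.mp hx
  have key : h * x = x * (h + 1) := by rw [mul_add, mul_one, k0]; abel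
  have pow : ∀ n : ℕ, h ^ n * x = x * (h + 1) ^ n := by
    intro n
    induction n with
    | zero => simp
    | succ n ih =>
      rw [pow_succ', mul_assoc, ih, ← mul_assoc, key, mul_assoc, ← pow_succ']
  have hp2 : (h + 1) ^ p = h ^ p + 1 := by
    have := add_pow_char_of_commute p (Commute.one_right h)
    simpa using this
  have hpx := pow p
  rw [hp2, mul_add, mul_one] at hpx
  rw [sub_mul, mul_sub, hpx, k0]
  abel
end

section
/- Let k be a field of characteristic ≠ 2 and let A be an associative k-algebra. Suppose a : ℕ → A is a family with a(0) = 0 satisfying, for all r, s ≥ 1, the anticommutation relation a(r)a(s) + a(s)a(r) = Σ_{t=0}^{min(r,s)-1} ( a(t) a(r+s-1-t) - a(r+s-1-t) a(t) ). Let a(u) = Σ_{r≥1} a(r) u^{-r} ∈ A[[u^{-1}]] and let a(u-1) denote the series obtained by the substitution u ↦ u - 1 (i.e. expanding (u-1)^{-r} = Σ_{m≥0} C(r+m-1, m) u^{-r-m}). Then a(u-1) · a(u) = 0 in A[[u^{-1}]]. -/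
open Finset

private lemma pascal_aux (i r : ℕ) (h : r < i) :
    i.choose (i - r) = (i - 1).choose (i - r - 1) + (i - 1).choose (i - r) := by
  set m := i - 1 with hm
  set t := i - r - 1 with ht
  have e1 : i - r = t + 1 := by omega
  have e3 : i = m + 1 := by omega
  rw [e1, ht]
  have e2 : i - r - 1 = t := by omega
  rw [e3, Nat.choose_succ_succ]

private def PhiAux {A : Type*} [Ring A] (B : ℕ → ℕ → A) (i j : ℕ) : A :=
  ∑ r ∈ range (i + 1), ((i - 1).choose (i - r)) • B r j

private lemma PhiAux_zero_left {A : Type*} [Ring A] (B : ℕ → ℕ → A)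
    (hB0 : ∀ j, B 0 j = 0) (j : ℕ) : PhiAux B 0 j = 0 := by
  simp [PhiAux, hB0]

private lemma PhiAux_zero_right {A : Type*} [Ring A] (B : ℕ → ℕ → A)
    (hB0' : ∀ r, B r 0 = 0) (i : ℕ) : PhiAux B i 0 = 0 := by
  simp [PhiAux, hB0']

private lemma PhiAux_succ {A : Type*} [Ring A] (B : ℕ → ℕ → A)
    (hB0 : ∀ j, B 0 j = 0) (i j : ℕ) :
    PhiAux B (i + 1) j
      = PhiAux B i j + ∑ r ∈ range (i + 1), ((i - 1).choose (i - r)) • B (r + 1) j := by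
  have hL : PhiAux B (i + 1) j = ∑ r ∈ range (i + 1), (i.choose (i - r)) • B (r + 1) j := by
    rw [PhiAux, Finset.sum_range_succ']
    have h1 : ∀ r : ℕ, (i + 1 - 1).choose (i + 1 - (r + 1)) = i.choose (i - r) := by
      intro r
      have e1 : i + 1 - 1 = i := by omega
      have e2 : i + 1 - (r + 1) = i - r := by omega
      rw [e1, e2]
    simp [h1, hB0]
  have hPhi : PhiAux B i j = ∑ r ∈ range i, ((i - 1).choose (i - r - 1)) • B (r + 1) j := by
    rw [PhiAux, Finset.sum_range_succ']
    have h1 : ∀ r : ℕ, (i - 1).choose (i - (r + 1)) = (i - 1).choose (i - r - 1) := by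
      intro r
      have e2 : i - (r + 1) = i - r - 1 := by omega
      rw [e2]
    simp [h1, hB0]
  rw [hL, hPhi, Finset.sum_range_succ,
      Finset.sum_range_succ (fun r => ((i - 1).choose (i - r)) • B (r + 1) j)]
  have hsum : ∑ r ∈ range i, (i.choose (i - r)) • B (r + 1) j
      = ∑ r ∈ range i, (((i - 1).choose (i - r - 1)) • B (r + 1) j
          + ((i - 1).choose (i - r)) • B (r + 1) j) := by
    refine Finset.sum_congr rfl (fun r hr => ?_)
    rw [pascal_aux i r (Finset.mem_range.mp hr), add_smul]
  rw [hsum, Finset.sum_add_distrib]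
  simp only [Nat.sub_self, Nat.choose_zero_right, one_smul]
  abel

theorem stmt_11 (k A : Type*) [Field k] (h2 : (2 : k) ≠ 0) [Ring A] [Algebra k A]
    (a : ℕ → A) (h0 : a 0 = 0)
    (hrel : ∀ r s : ℕ, 1 ≤ r → 1 ≤ s →
      a r * a s + a s * a r =
        ∑ t ∈ Finset.range (min r s),
          (a t * a (r + s - 1 - t) - a (r + s - 1 - t) * a t)) :
    (PowerSeries.mk fun N => ∑ r ∈ Finset.range (N + 1),
        ((N - 1).choose (N - r)) • a r) * PowerSeries.mk a = 0 := by
  set B : ℕ → ℕ → A := fun r s => a r * a s + a s * a r with hBdef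
  have hB0 : ∀ j, B 0 j = 0 := fun j => by simp [hBdef, h0]
  have hB0' : ∀ r, B r 0 = 0 := fun r => by simp [hBdef, h0]
  -- the "star" relation
  have starB : ∀ r s : ℕ, B (r + 1) s = B r (s + 1) + (a r * a s - a s * a r) := by
    intro r s
    rcases Nat.eq_zero_or_pos r with hr | hr
    · subst hr
      rcases Nat.eq_zero_or_pos s with hs | hs
      · subst hs; simp [hBdef, h0]
      · have h1 := hrel 1 s le_rfl hs
        have hmin : min 1 s = 1 := by omega
        rw [hmin, Finset.sum_range_one] at h1
        simp [hBdef, h0] at h1 ⊢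
        simpa using h1
    · rcases Nat.eq_zero_or_pos s with hs | hs
      · subst hs
        have h1 := hrel r 1 hr le_rfl
        have hmin : min r 1 = 1 := by omega
        rw [hmin, Finset.sum_range_one] at h1
        simp [hBdef, h0] at h1 ⊢
        simpa using h1.symm
      · -- main case r, s ≥ 1
        have h1 := hrel (r + 1) s (by omega) hs
        have h2' := hrel r (s + 1) hr (by omega)
        have e1 : ∀ t : ℕ, r + 1 + s - 1 - t = r + s - t := fun t => by omega
        have e2 : ∀ t : ℕ, r + (s + 1) - 1 - t = r + s - t := fun t => by omega
        simp only [e1] at h1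
        simp only [e2] at h2'
        show B (r + 1) s = B r (s + 1) + (a r * a s - a s * a r)
        rw [show B (r + 1) s = a (r + 1) * a s + a s * a (r + 1) from rfl,
            show B r (s + 1) = a r * a (s + 1) + a (s + 1) * a r from rfl, h1, h2']
        rcases lt_trichotomy r s with hlt | heq | hgt
        · have m1 : min (r + 1) s = r + 1 := by omega
          have m2 : min r (s + 1) = r := by omega
          rw [m1, m2, Finset.sum_range_succ]
          have e3 : r + s - r = s := by omega
          rw [e3]; try abel
        · subst heq
          have m1 : min (r + 1) r = r := by omega
          have m2 : min r (r + 1) = r := by omega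
          rw [m1, m2]; abel
        · have m1 : min (r + 1) s = s := by omega
          have m2 : min r (s + 1) = s + 1 := by omega
          rw [m1, m2, Finset.sum_range_succ]
          have e3 : r + s - s = r := by omega
          rw [e3]; try abel
  -- coefficientwise
  ext n
  rw [map_zero, PowerSeries.coeff_mul, Finset.Nat.sum_antidiagonal_eq_sum_range_succ_mk]
  simp only [PowerSeries.coeff_mk]
  set S : A := ∑ i ∈ range (n + 1),
      (∑ r ∈ range (i + 1), ((i - 1).choose (i - r)) • a r) * a (n - i) with hSdef
  show S = 0
  have key : (2 : ℕ) • S = 0 := by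
    rw [hSdef, Finset.smul_sum]
    have step : ∀ i ∈ range (n + 1),
        (2 : ℕ) • ((∑ r ∈ range (i + 1), ((i - 1).choose (i - r)) • a r) * a (n - i))
          = PhiAux B (i + 1) (n - i) - PhiAux B i (n - i + 1) := by
      intro i _
      set j := n - i
      rw [Finset.sum_mul, Finset.smul_sum]
      have hterm : ∀ r, (2 : ℕ) • ((((i - 1).choose (i - r)) • a r) * a j)
          = ((i - 1).choose (i - r)) • (B r j + B (r + 1) j - B r (j + 1)) := by
        intro r
        rw [smul_mul_assoc, smul_comm, starB r j]
        congr 1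
        rw [two_smul]
        show a r * a j + a r * a j
          = B r j + (B r (j + 1) + (a r * a j - a j * a r)) - B r (j + 1)
        rw [show B r j = a r * a j + a j * a r from rfl]
        abel
      rw [Finset.sum_congr rfl (fun r _ => hterm r)]
      simp only [smul_add, smul_sub]
      rw [Finset.sum_sub_distrib, Finset.sum_add_distrib]
      rw [PhiAux_succ B hB0 i j]
      show PhiAux B i j + _ - PhiAux B i (j + 1) = _
      abel
    rw [Finset.sum_congr rfl step]
    have hre : ∀ i ∈ range (n + 1),
        PhiAux B (i + 1) (n - i) - PhiAux B i (n - i + 1)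
          = PhiAux B (i + 1) (n + 1 - (i + 1)) - PhiAux B i (n + 1 - i) := by
      intro i hi
      have hi' := Finset.mem_range.mp hi
      have e2 : n - i + 1 = n + 1 - i := by omega
      rw [e2]
      have e1 : n - i = n + 1 - (i + 1) := by omega
      rw [e1]
    rw [Finset.sum_congr rfl hre,
        Finset.sum_range_sub (fun i => PhiAux B i (n + 1 - i))]
    simp only [Nat.sub_self, Nat.sub_zero]
    rw [PhiAux_zero_right B hB0', PhiAux_zero_left B hB0, sub_zero]
  -- conclude from 2 • S = 0 and char k ≠ 2
  have hk : ((2 : ℕ) : k) • S = 0 := by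
    rw [Nat.cast_smul_eq_nsmul]; exact key
  have h2S : (2 : k) • S = 0 := by
    have hc : ((2 : ℕ) : k) = (2 : k) := by norm_num
    rwa [hc] at hk
  calc S = ((2 : k)⁻¹ * 2) • S := by rw [inv_mul_cancel₀ h2, one_smul]
    _ = (2 : k)⁻¹ • ((2 : k) • S) := by rw [mul_smul]
    _ = 0 := by rw [h2S, smul_zero]
end

section
/- Let k be a field of characteristic ≠ 2 and A an associative k-algebra. Suppose b, c : ℕ → A satisfy b(0) = 1, c(0) = 0 and the commutation relation b(r)c(s) - c(s)b(r) = Σ_{t=0}^{min(r,s)-1} ( c(t) b(r+s-1-t) - c(r+s-1-t) b(t) ) for all r, s ≥ 0. Let b(u) = Σ_{r≥0} b(r) u^{-r} and c(u) = Σ_{r≥0} c(r) u^{-r} in A[[u^{-1}]], and for a nonnegative integer n let b(u-n), c(u-n) denote the series obtained by the substitution u ↦ u - n. Then for every integer n ≥ 0: (n+1) · c(u) b(u-n) = n · b(u-n) c(u) + c(u-n) b(u). -/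
/-- The series obtained from `x(u) = ∑ x r • u^{-r}` by the substitution `u ↦ u - n`,
using `(u-n)^{-r} = ∑_{m ≥ 0} C(r+m-1, m) n^m u^{-r-m}`. -/
noncomputable def shiftSeries {A : Type*} [Ring A] (x : ℕ → A) (n : ℕ) :
    PowerSeries A :=
  PowerSeries.mk fun N => ∑ r ∈ Finset.range (N + 1),
    ((N - 1).choose (N - r) * n ^ (N - r)) • x r

section Aux

open Finset

variable {k A : Type*} [Field k] [Ring A] [Algebra k A]

/-- Pairing lemma: a reflection-symmetric weighted sum of an antisymmetric
function along an antidiagonal vanishes (char ≠ 2). -/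
lemma pair_sum (h2 : (2 : k) ≠ 0) (E : ℕ → ℕ → A) (hE : ∀ a b, E a b = - E b a)
    (M : ℕ) (α : ℕ → ℕ) (hα : ∀ a ≤ M, α a = α (M - a)) :
    ∑ a ∈ Finset.range (M + 1), α a • E a (M - a) = 0 := by
  set S := ∑ a ∈ Finset.range (M + 1), α a • E a (M - a) with hS
  have h1 : S + S = 0 := by
    nth_rewrite 1 [hS, ← Finset.sum_range_reflect]
    rw [hS, ← Finset.sum_add_distrib]
    apply Finset.sum_eq_zero
    intro a ha
    have haM : a ≤ M := by simpa [Nat.lt_succ_iff] using Finset.mem_range.mp ha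
    have e1 : M + 1 - 1 - a = M - a := by omega
    have e2 : M - (M - a) = a := by omega
    rw [e1, e2, hE (M - a) a, ← hα a haM, smul_neg, neg_add_cancel]
  have h2S : (2 : k) • S = 0 := by rw [two_smul]; exact h1
  calc S = (2 : k)⁻¹ • (2 : k) • S := (inv_smul_smul₀ h2 S).symm
    _ = 0 := by rw [h2S, smul_zero]

/-- Hockey-stick identity. -/
lemma hockey (m' : ℕ) : ∀ (d a : ℕ),
    (a + m').choose (m' + 1) + ∑ j ∈ Finset.range d, (a + j + m').choose m'
      = (a + d + m').choose (m' + 1) := by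
  intro d
  induction d with
  | zero => simp
  | succ d ih =>
    intro a
    rw [Finset.sum_range_succ, ← add_assoc, ih a]
    have e : a + (d + 1) + m' = (a + d + m') + 1 := by omega
    rw [e, Nat.choose_succ_succ' (a + d + m') m']
    omega

/-- Symmetry of the combined coefficient. -/
lemma alpha_symm (j M a : ℕ) (haM : a ≤ M) :
    (a + j).choose (j + 1) + ∑ t ∈ Finset.range (M - a - a), (a + t + j).choose j
      = (M - a + j).choose (j + 1)
        + ∑ t ∈ Finset.range (M - (M - a) - (M - a)), (M - a + t + j).choose j := by
  rcases le_or_gt (a + a) M with h | h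
  · have e0 : M - (M - a) - (M - a) = 0 := by omega
    rw [e0, Finset.range_zero, Finset.sum_empty, add_zero]
    have := hockey j (M - a - a) a
    rw [this]
    congr 1
    omega
  · have e0 : M - a - a = 0 := by omega
    rw [e0, Finset.range_zero, Finset.sum_empty, add_zero]
    have := hockey j (M - (M - a) - (M - a)) (M - a)
    rw [this]
    congr 1
    omega

/-- Extend a range sum with an indicator. -/
lemma sum_range_extend {M : Type*} [AddCommMonoid M] (f : ℕ → M) {s K : ℕ}
    (h : s ≤ K) :
    ∑ t ∈ Finset.range s, f t = ∑ t ∈ Finset.range K, if t < s then f t else 0 := by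
  rw [← Finset.sum_filter]
  congr 1
  ext t
  simp only [Finset.mem_filter, Finset.mem_range]
  omega

/-- Triangle sum swap. -/
lemma tri_swap {M : Type*} [AddCommMonoid M] (N : ℕ) (f : ℕ → ℕ → M) :
    ∑ p ∈ Finset.range (N + 1), ∑ j ∈ Finset.range (p + 1), f p j
      = ∑ j ∈ Finset.range (N + 1), ∑ i ∈ Finset.range (N + 1 - j), f (j + i) j := by
  have h1 : ∀ p ∈ Finset.range (N + 1),
      ∑ j ∈ Finset.range (p + 1), f p j
        = ∑ j ∈ Finset.range (N + 1), if j < p + 1 then f p j else 0 := by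
    intro p hp
    exact sum_range_extend _ (by simpa [Nat.lt_succ_iff] using Finset.mem_range.mp hp)
  rw [Finset.sum_congr rfl h1, Finset.sum_comm]
  apply Finset.sum_congr rfl
  intro j hj
  have hjN : j ≤ N := by simpa [Nat.lt_succ_iff] using Finset.mem_range.mp hj
  have h2 : ∑ p ∈ Finset.range (N + 1), (if j < p + 1 then f p j else 0)
      = ∑ p ∈ Finset.Ico j (N + 1), f p j := by
    rw [← Finset.sum_filter]
    congr 1
    ext p
    simp only [Finset.mem_filter, Finset.mem_range, Finset.mem_Ico]
    omega
  rw [h2, Finset.sum_Ico_eq_sum_range]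

lemma ite_smul_zero {M : Type*} [AddCommMonoid M] (p : Prop) [Decidable p]
    (w : ℕ) (x : M) : (if p then w • x else 0) = (if p then w else 0) • x := by
  split <;> simp

end Aux

section Main

open Finset

variable {k A : Type*} [Field k] [Ring A] [Algebra k A]

/-- The coefficient-level statement. -/
lemma core_identity (h2 : (2 : k) ≠ 0)
    (b c : ℕ → A) (hb0 : b 0 = 1) (hc0 : c 0 = 0)
    (hrel : ∀ r s : ℕ,
      b r * c s - c s * b r =
        ∑ t ∈ Finset.range (min r s),
          (c t * b (r + s - 1 - t) - c (r + s - 1 - t) * b t))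
    (n N : ℕ) :
    (n + 1) • (∑ p ∈ range (N + 1), c p *
        (∑ r ∈ range ((N - p) + 1),
          ((N - p - 1).choose (N - p - r) * n ^ (N - p - r)) • b r)) =
      n • (∑ p ∈ range (N + 1),
        (∑ r ∈ range (p + 1), ((p - 1).choose (p - r) * n ^ (p - r)) • b r) * c (N - p)) +
      ∑ p ∈ range (N + 1),
        (∑ r ∈ range (p + 1), ((p - 1).choose (p - r) * n ^ (p - r)) • c r) * b (N - p) := by
  -- abbreviations
  set D : ℕ → ℕ → A := fun r s => b r * c s - c s * b r with hD
  set E : ℕ → ℕ → A := fun r s => c r * b s - c s * b r with hEdef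
  have hE : ∀ a b, E a b = - E b a := by
    intro a b'; simp only [hEdef]; rw [neg_sub]
  -- reflected form of the inner sums
  have hSx : ∀ (x : ℕ → A) (q : ℕ),
      ∑ r ∈ range (q + 1), ((q - 1).choose (q - r) * n ^ (q - r)) • x r
        = ∑ j ∈ range (q + 1), ((q - 1).choose j * n ^ j) • x (q - j) := by
    intro x q
    rw [← Finset.sum_range_reflect]
    apply Finset.sum_congr rfl
    intro j hj
    have hjq : j ≤ q := by simpa [Nat.lt_succ_iff] using Finset.mem_range.mp hj
    have e1 : q + 1 - 1 - j = q - j := by omega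
    have e2 : q - (q - j) = j := by omega
    rw [e1, e2]
  -- the reflected inner sums
  set Sb : ℕ → A := fun p => ∑ j ∈ range (p + 1), ((p - 1).choose j * n ^ j) • b (p - j)
    with hSb
  set Sc : ℕ → A := fun p => ∑ j ∈ range (p + 1), ((p - 1).choose j * n ^ j) • c (p - j)
    with hSc
  -- the two key double sums
  set UD : A := ∑ p ∈ range (N + 1), ∑ j ∈ range (p + 1),
    ((p - 1).choose j * n ^ j) • D (p - j) (N - p) with hUD
  set UE : A := ∑ p ∈ range (N + 1), ∑ j ∈ range (p + 1),
    ((p - 1).choose j * n ^ j) • E (p - j) (N - p) with hUE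
  -- the grouped-by-powers-of-n sums
  set PD : ℕ → A := fun j => ∑ i ∈ range (N + 1 - j),
    ((i + j - 1).choose j) • D i (N - j - i) with hPD
  set PE : ℕ → A := fun j => ∑ i ∈ range (N + 1 - j),
    ((i + j - 1).choose j) • E i (N - j - i) with hPE
  -- regroup UD, UE by the power of n
  have hUD' : UD = ∑ j ∈ range (N + 1), n ^ j • PD j := by
    rw [hUD, tri_swap]
    apply Finset.sum_congr rfl
    intro j hj
    rw [hPD, Finset.smul_sum]
    apply Finset.sum_congr rfl
    intro i hi
    have e1 : j + i - j = i := by omega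
    have e2 : j + i - 1 = i + j - 1 := by omega
    have e3 : N - (j + i) = N - j - i := by omega
    rw [e1, e2, e3, mul_comm, mul_smul]
  have hUE' : UE = ∑ j ∈ range (N + 1), n ^ j • PE j := by
    rw [hUE, tri_swap]
    apply Finset.sum_congr rfl
    intro j hj
    rw [hPE, Finset.smul_sum]
    apply Finset.sum_congr rfl
    intro i hi
    have e1 : j + i - j = i := by omega
    have e2 : j + i - 1 = i + j - 1 := by omega
    have e3 : N - (j + i) = N - j - i := by omega
    rw [e1, e2, e3, mul_comm, mul_smul]
  -- the top term of the D-part vanishes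
  have hPDN : PD N = 0 := by
    simp only [hPD]
    have e : N + 1 - N = 1 := by omega
    rw [e, Finset.sum_range_one]
    have e2 : N - N - 0 = 0 := by omega
    rw [e2]
    simp only [hD]
    simp [hc0]
  -- the bottom term of the E-part vanishes
  have hPE0 : PE 0 = 0 := by
    simp only [hPE]
    have e : N + 1 - 0 = N + 1 := by omega
    rw [e]
    have : ∀ i ∈ range (N + 1),
        ((i + 0 - 1).choose 0) • E i (N - 0 - i)

          = (fun _ : ℕ => 1) i • E i (N - i) := by
      intro i hi
      have e1 : N - 0 - i = N - i := by omega
      rw [e1, Nat.choose_zero_right]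
    rw [Finset.sum_congr rfl this]
    exact pair_sum h2 E hE N (fun _ => 1) (fun a _ => rfl)
  -- the matched terms vanish
  have hB : ∀ j, j < N → PD j + PE (j + 1) = 0 := by
    intro j hj
    set M := N - j - 1 with hM
    -- rewrite PE (j+1)
    have hPE' : PE (j + 1) = ∑ a ∈ range (M + 1), ((a + j).choose (j + 1)) • E a (M - a) := by
      simp only [hPE]
      have e : N + 1 - (j + 1) = M + 1 := by omega
      rw [e]
      apply Finset.sum_congr rfl
      intro a ha
      have e1 : a + (j + 1) - 1 = a + j := by omega
      have e2 : N - (j + 1) - a = M - a := by omega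
      rw [e1, e2]
    -- rewrite PD j using the commutation relation
    have hDi : ∀ i ∈ range (M + 2), D i (M + 1 - i)
        = ∑ t ∈ range (min i (M + 1 - i)), E t (M - t) := by
      intro i hi
      have hiM : i ≤ M + 1 := by
        have := Finset.mem_range.mp hi; omega
      simp only [hD, hEdef]
      rw [hrel i (M + 1 - i)]
      apply Finset.sum_congr rfl
      intro t ht
      have e' : i + (M + 1 - i) - 1 - t = M - t := by omega
      rw [e']
    have hPD' : PD j = ∑ t ∈ range (M + 1),
        (∑ s ∈ range (M - t - t), (t + s + j).choose j) • E t (M - t) := by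
      simp only [hPD]
      have e : N + 1 - j = M + 2 := by omega
      rw [e]
      have step1 : ∀ i ∈ range (M + 2),
          ((i + j - 1).choose j) • D i (N - j - i)
            = ∑ t ∈ range (M + 1), if t < min i (M + 1 - i)
                then ((i + j - 1).choose j : ℕ) • E t (M - t) else 0 := by
        intro i hi
        have e2 : N - j - i = M + 1 - i := by omega
        rw [e2, hDi i hi, Finset.smul_sum]
        exact sum_range_extend _ (by omega)
      rw [Finset.sum_congr rfl step1, Finset.sum_comm]
      apply Finset.sum_congr rfl
      intro t ht
      have htM : t ≤ M := by
        have := Finset.mem_range.mp ht; omega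
      have step2 : ∀ i ∈ range (M + 2),
          (if t < min i (M + 1 - i) then ((i + j - 1).choose j : ℕ) • E t (M - t) else 0)
            = (if t < min i (M + 1 - i) then ((i + j - 1).choose j : ℕ) else 0) • E t (M - t) := by
        intro i _
        exact ite_smul_zero _ _ _
      rw [Finset.sum_congr rfl step2, ← Finset.sum_smul]
      congr 1
      rw [← Finset.sum_filter]
      have hfil : Finset.filter (fun i => t < min i (M + 1 - i)) (range (M + 2))
          = Finset.Icc (t + 1) (M - t) := by
        ext i
        simp only [Finset.mem_filter, Finset.mem_range, Finset.mem_Icc, lt_min_iff]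
        omega
      rw [hfil, ← Finset.Ico_add_one_right_eq_Icc, Finset.sum_Ico_eq_sum_range]
      have e3 : M - t + 1 - (t + 1) = M - t - t := by omega
      rw [e3]
      apply Finset.sum_congr rfl
      intro s hs
      congr 1
      omega
    rw [hPD', hPE', ← Finset.sum_add_distrib]
    have step3 : ∀ a ∈ range (M + 1),
        (∑ s ∈ range (M - a - a), (a + s + j).choose j) • E a (M - a)
            + ((a + j).choose (j + 1)) • E a (M - a)
          = ((a + j).choose (j + 1) + ∑ s ∈ range (M - a - a), (a + s + j).choose j)
              • E a (M - a) := by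
      intro a _
      rw [add_smul]
      abel
    rw [Finset.sum_congr rfl step3]
    exact pair_sum h2 E hE M _ (fun a ha => alpha_symm j M a ha)
  -- the key identity
  have key : n • UD + UE = 0 := by
    rw [hUD', hUE', Finset.smul_sum]
    have e1 : ∀ j ∈ range (N + 1), n • (n ^ j • PD j) = n ^ (j + 1) • PD j := by
      intro j _
      rw [smul_smul, ← pow_succ']
    rw [Finset.sum_congr rfl e1, Finset.sum_range_succ, Finset.sum_range_succ'
      (fun j => n ^ j • PE j) N]
    have e2 : ∑ j ∈ range N, n ^ (j + 1) • PD j + n ^ (N + 1) • PD N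
        + (∑ j ∈ range N, n ^ (j + 1) • PE (j + 1) + n ^ 0 • PE 0)
        = (∑ j ∈ range N, (n ^ (j + 1) • PD j + n ^ (j + 1) • PE (j + 1)))
          + n ^ (N + 1) • PD N + n ^ 0 • PE 0 := by
      rw [Finset.sum_add_distrib]
      abel
    rw [e2, hPDN, hPE0, smul_zero, smul_zero, add_zero, add_zero]
    apply Finset.sum_eq_zero
    intro j hj
    rw [← smul_add, hB j (Finset.mem_range.mp hj), smul_zero]
  -- put everything together
  have hT1 : (∑ p ∈ range (N + 1), c p *
        (∑ r ∈ range ((N - p) + 1),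
          ((N - p - 1).choose (N - p - r) * n ^ (N - p - r)) • b r))
      = ∑ p ∈ range (N + 1), c (N - p) * Sb p := by
    rw [← Finset.sum_range_reflect]
    apply Finset.sum_congr rfl
    intro p hp
    have hpN : p ≤ N := by simpa [Nat.lt_succ_iff] using Finset.mem_range.mp hp
    have e1 : N + 1 - 1 - p = N - p := by omega
    have e2 : N - (N - p) = p := by omega
    rw [e1, e2, hSx b p, hSb]
  have hT2 : ∑ p ∈ range (N + 1),
        (∑ r ∈ range (p + 1), ((p - 1).choose (p - r) * n ^ (p - r)) • b r) * c (N - p)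
      = ∑ p ∈ range (N + 1), c (N - p) * Sb p
        + ∑ p ∈ range (N + 1), ∑ j ∈ range (p + 1),
            ((p - 1).choose j * n ^ j) • D (p - j) (N - p) := by
    rw [← Finset.sum_add_distrib]
    apply Finset.sum_congr rfl
    intro p hp
    simp only [hSb]
    rw [hSx b p, Finset.sum_mul, Finset.mul_sum, ← Finset.sum_add_distrib]
    apply Finset.sum_congr rfl
    intro j hj
    simp only [hD]
    rw [smul_mul_assoc, mul_smul_comm, ← smul_add]
    congr 1
    rw [add_comm, sub_add_cancel]
  have hT3 : ∑ p ∈ range (N + 1),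
        (∑ r ∈ range (p + 1), ((p - 1).choose (p - r) * n ^ (p - r)) • c r) * b (N - p)
      = ∑ p ∈ range (N + 1), c (N - p) * Sb p
        + ∑ p ∈ range (N + 1), ∑ j ∈ range (p + 1),
            ((p - 1).choose j * n ^ j) • E (p - j) (N - p) := by
    rw [← Finset.sum_add_distrib]
    apply Finset.sum_congr rfl
    intro p hp
    simp only [hSb, hSc]
    rw [hSx c p, Finset.sum_mul, Finset.mul_sum, ← Finset.sum_add_distrib]
    apply Finset.sum_congr rfl
    intro j hj
    simp only [hEdef]
    rw [smul_mul_assoc, mul_smul_comm, ← smul_add]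
    congr 1
    rw [add_comm, sub_add_cancel]
  rw [hT1, hT2, hT3, ← hUD, ← hUE]
  set X : A := ∑ p ∈ range (N + 1), c (N - p) * Sb p with hX
  rw [succ_nsmul, smul_add]
  calc n • X + X = n • X + X + (n • UD + UE) := by rw [key, add_zero]
    _ = n • X + n • UD + (X + UE) := by abel

end Main

theorem stmt_12 (k A : Type*) [Field k] (h2 : (2 : k) ≠ 0) [Ring A] [Algebra k A]
    (b c : ℕ → A) (hb0 : b 0 = 1) (hc0 : c 0 = 0)
    (hrel : ∀ r s : ℕ,
      b r * c s - c s * b r =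
        ∑ t ∈ Finset.range (min r s),
          (c t * b (r + s - 1 - t) - c (r + s - 1 - t) * b t))
    (n : ℕ) :
    (n + 1) • (PowerSeries.mk c * shiftSeries b n) =
      n • (shiftSeries b n * PowerSeries.mk c) +
        shiftSeries c n * PowerSeries.mk b := by
  ext N
  simp only [map_nsmul, map_add, PowerSeries.coeff_mul,
    Finset.Nat.sum_antidiagonal_eq_sum_range_succ_mk, PowerSeries.coeff_mk, shiftSeries]
  exact core_identity h2 b c hb0 hc0 hrel n N
end

section
/- Let k be a field, A a unital k-algebra, and let x₁, …, x_k ∈ A be pairwise anticommuting elements with x_i² = 0. Let M be an A-module containing a vector m such that M = span_k { x_{i_1} ⋯ x_{i_j} · m : 1 ≤ i_1 < ⋯ < i_j ≤ k, j ≥ 0 }. If N ⊆ M is an A-submodule not contained in span_k { x_{i_1} ⋯ x_{i_j} · m : j ≥ 1 }, then N = M. -/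
lemma aux_mul_prod_eq_zero {A : Type*} [Ring A] {n : ℕ} (x : Fin n → A)
    (hanti : ∀ i j, x i * x j = -(x j * x i)) (hsq : ∀ i, x i * x i = 0)
    (i : Fin n) : ∀ (l : List (Fin n)), i ∈ l → x i * (l.map x).prod = 0 := by
  intro l
  induction l with
  | nil => simp
  | cons h t ih =>
    intro hmem
    simp only [List.map_cons, List.prod_cons]
    rcases List.mem_cons.mp hmem with rfl | hmem'
    · rw [← mul_assoc, hsq, zero_mul]
    · rw [← mul_assoc, hanti i h, neg_mul, mul_assoc, ih hmem', mul_zero, neg_zero]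

lemma aux_prod_eq_zero_of_not_nodup {A : Type*} [Ring A] {n : ℕ} (x : Fin n → A)
    (hanti : ∀ i j, x i * x j = -(x j * x i)) (hsq : ∀ i, x i * x i = 0) :
    ∀ (l : List (Fin n)), ¬ l.Nodup → (l.map x).prod = 0 := by
  intro l
  induction l with
  | nil => intro h; exact absurd List.nodup_nil h
  | cons h t ih =>
    intro hnd
    simp only [List.map_cons, List.prod_cons]
    rw [List.nodup_cons, not_and_or, not_not] at hnd
    rcases hnd with hmem | hnd'
    · exact aux_mul_prod_eq_zero x hanti hsq h t hmem
    · rw [ih hnd', mul_zero]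

theorem stmt_15 (k A M : Type*) [Field k] [Ring A] [Algebra k A]
    [AddCommGroup M] [Module A M] [Module k M] [IsScalarTower k A M]
    (n : ℕ) (x : Fin n → A)
    (hanti : ∀ i j, x i * x j = -(x j * x i)) (hsq : ∀ i, x i * x i = 0)
    (m : M)
    (hspan : Submodule.span k
        {v : M | ∃ s : Finset (Fin n), v = ((s.sort (· ≤ ·)).map x).prod • m} = ⊤)
    (N : Submodule A M)
    (hN : ¬ (N : Set M) ⊆ (Submodule.span k
        {v : M | ∃ s : Finset (Fin n), s.Nonempty ∧
          v = ((s.sort (· ≤ ·)).map x).prod • m} : Set M)) :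
    N = ⊤ := by
  -- Submodules of A spanned by products of length ≥ j
  set R : ℕ → Submodule k A := fun j =>
    Submodule.span k {a : A | ∃ l : List (Fin n), j ≤ l.length ∧ a = (l.map x).prod} with hR
  have hmul : ∀ j : ℕ, (R j) * (R 1) ≤ R (j + 1) := by
    intro j
    rw [hR]
    rw [Submodule.span_mul_span]
    apply Submodule.span_le.mpr
    rintro a ⟨b, ⟨l₁, hl₁, rfl⟩, c, ⟨l₂, hl₂, rfl⟩, rfl⟩
    apply Submodule.subset_span
    refine ⟨l₁ ++ l₂, ?_, ?_⟩
    · simp only [List.length_append]; omega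
    · rw [List.map_append, List.prod_append]
  have hpow : ∀ (y : A), y ∈ R 1 → ∀ i : ℕ, y ^ (i + 1) ∈ R (i + 1) := by
    intro y hy i
    induction i with
    | zero => simpa using hy
    | succ i ih =>
      rw [pow_succ]
      exact hmul (i + 1) (Submodule.mul_mem_mul ih hy)
  have hRbot : R (n + 1) = ⊥ := by
    rw [hR, eq_bot_iff]
    apply Submodule.span_le.mpr
    rintro a ⟨l, hl, rfl⟩
    have hnd : ¬ l.Nodup := by
      intro h
      have := h.length_le_card
      simp only [Fintype.card_fin] at this
      omega
    simp only [SetLike.mem_coe, Submodule.mem_bot]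
    exact aux_prod_eq_zero_of_not_nodup x hanti hsq l hnd
  have hnil : ∀ y ∈ R 1, IsNilpotent y := by
    intro y hy
    refine ⟨n + 1, ?_⟩
    have := hpow y hy n
    rw [hRbot] at this
    simpa using this
  -- the k-linear map a ↦ a • m
  set f : A →ₗ[k] M :=
    { toFun := fun a => a • m
      map_add' := fun a b => add_smul a b m
      map_smul' := fun c a => smul_assoc c a m } with hf
  set Q : Submodule k A := Submodule.span k
    {a : A | ∃ s : Finset (Fin n), s.Nonempty ∧ a = ((s.sort (· ≤ ·)).map x).prod} with hQ
  set P : Submodule k M := Submodule.span k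
    {v : M | ∃ s : Finset (Fin n), s.Nonempty ∧
      v = ((s.sort (· ≤ ·)).map x).prod • m} with hP
  have hPQ : P = Q.map f := by
    rw [hP, hQ, Submodule.map_span]
    congr 1
    ext v
    constructor
    · rintro ⟨s, hs, rfl⟩
      exact ⟨_, ⟨s, hs, rfl⟩, rfl⟩
    · rintro ⟨a, ⟨s, hs, rfl⟩, rfl⟩
      exact ⟨s, hs, rfl⟩
  have hQR : Q ≤ R 1 := by
    rw [hQ, hR]
    apply Submodule.span_le.mpr
    rintro a ⟨s, hs, rfl⟩
    apply Submodule.subset_span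
    refine ⟨s.sort (· ≤ ·), ?_, rfl⟩
    rw [Finset.length_sort]
    exact hs.card_pos
  -- pick v ∈ N, v ∉ P
  rw [Set.not_subset] at hN
  obtain ⟨v, hvN, hvP⟩ := hN
  -- decompose v = c • m + p
  have hvtop : v ∈ Submodule.span k
      {v : M | ∃ s : Finset (Fin n), v = ((s.sort (· ≤ ·)).map x).prod • m} := by
    rw [hspan]; trivial
  have hle : Submodule.span k
      {v : M | ∃ s : Finset (Fin n), v = ((s.sort (· ≤ ·)).map x).prod • m}
      ≤ Submodule.span k {m} ⊔ P := by
    apply Submodule.span_le.mpr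
    rintro w ⟨s, rfl⟩
    rcases s.eq_empty_or_nonempty with rfl | hs
    · apply Submodule.mem_sup_left
      apply Submodule.subset_span
      simp [Finset.sort_empty]
    · apply Submodule.mem_sup_right
      exact Submodule.subset_span ⟨s, hs, rfl⟩
  obtain ⟨a, ha, p, hp, hvap⟩ := Submodule.mem_sup.mp (hle hvtop)
  obtain ⟨c, rfl⟩ := Submodule.mem_span_singleton.mp ha
  have hc : c ≠ 0 := by
    rintro rfl
    apply hvP
    rw [← hvap]
    simpa using hp
  rw [hPQ] at hp
  obtain ⟨y, hyQ, rfl⟩ := hp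
  -- v = (algebraMap k A c + y) • m
  have hv : v = (algebraMap k A c + y) • m := by
    rw [← hvap, add_smul, algebraMap_smul]
    rfl
  have hunit : IsUnit (algebraMap k A c + y) := by
    apply IsNilpotent.isUnit_add_left_of_commute (hnil y (hQR hyQ))
    · exact (isUnit_iff_ne_zero.mpr hc).map (algebraMap k A)
    · exact (Algebra.commutes c y).symm
  obtain ⟨u, hu⟩ := hunit
  have hmN : m ∈ N := by
    have : (↑u⁻¹ : A) • v ∈ N := N.smul_mem _ hvN
    rwa [hv, ← hu, smul_smul, Units.inv_mul, one_smul] at this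
  -- conclude N = ⊤
  rw [eq_top_iff]
  rintro w -
  have hw : w ∈ Submodule.span k
      {v : M | ∃ s : Finset (Fin n), v = ((s.sort (· ≤ ·)).map x).prod • m} := by
    rw [hspan]; trivial
  induction hw using Submodule.span_induction with
  | mem w hwmem =>
    obtain ⟨s, rfl⟩ := hwmem
    exact N.smul_mem _ hmN
  | zero => exact N.zero_mem
  | add a b _ _ ha hb => exact N.add_mem ha hb
  | smul c w _ hw =>
    rw [← algebraMap_smul A c w]
    exact N.smul_mem _ hw
end
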